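/- arXiv:0812.2156 — 5 statements merged into one kernel-verified Lean document; each statement's English description precedes it below -/
import Mathlib

section
/- Let L be a complex Leibniz superalgebra with dim L₀ = n and dim L₁ = m whose nilindex equals n+m+1. Then L is isomorphic to one of the following two superalgebras (all products of basis elements not listed are zero): (i) m = 0 and L has a basis e₁,…,e_n of L₀ with [e_i,e₁]=e_{i+1} for 1 ≤ i ≤ n−1; (ii) L has a basis e₁,…,e_{n+m} with e_i ∈ L₁ for i odd and e_i ∈ L₀ for i even, satisfying [e_i,e₁]=e_{i+1} for 1 ≤ i ≤ n+m−1 and [e_i,e₂]=2e_{i+2} for 1 ≤ i ≤ n+m−2; moreover, in case (ii) one has m = n when n+m is even and m = n+1 when n+m is odd. -/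
/-- A complex Leibniz superalgebra: a ℤ₂-graded complex vector space `L = L₀ ⊕ L₁`
with a bilinear bracket satisfying `[L_α, L_β] ⊆ L_{α+β}` and the Leibniz
superidentity `[x,[y,z]] = [[x,y],z] − (−1)^{αβ}[[x,z],y]` for homogeneous `y, z`. -/
structure LeibnizSuper (L : Type*) [AddCommGroup L] [Module ℂ L] where
  bracket : L →ₗ[ℂ] L →ₗ[ℂ] L
  L0 : Submodule ℂ L
  L1 : Submodule ℂ L
  compl : IsCompl L0 L1
  g00 : ∀ y ∈ L0, ∀ z ∈ L0, bracket y z ∈ L0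
  g01 : ∀ y ∈ L0, ∀ z ∈ L1, bracket y z ∈ L1
  g10 : ∀ y ∈ L1, ∀ z ∈ L0, bracket y z ∈ L1
  g11 : ∀ y ∈ L1, ∀ z ∈ L1, bracket y z ∈ L0
  leib00 : ∀ x : L, ∀ y ∈ L0, ∀ z ∈ L0,
    bracket x (bracket y z) = bracket (bracket x y) z - bracket (bracket x z) y
  leib01 : ∀ x : L, ∀ y ∈ L0, ∀ z ∈ L1,
    bracket x (bracket y z) = bracket (bracket x y) z - bracket (bracket x z) y
  leib10 : ∀ x : L, ∀ y ∈ L1, ∀ z ∈ L0,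
    bracket x (bracket y z) = bracket (bracket x y) z - bracket (bracket x z) y
  leib11 : ∀ x : L, ∀ y ∈ L1, ∀ z ∈ L1,
    bracket x (bracket y z) = bracket (bracket x y) z + bracket (bracket x z) y

/-- `HasJordanType f ls` : the nilpotent endomorphism `f` has Jordan blocks of sizes
given by the decreasing list `ls` (the number of blocks of size `≥ j+1` equals
`rank f^j − rank f^{j+1}`). -/
def HasJordanType {V : Type*} [AddCommGroup V] [Module ℂ V] (f : Module.End ℂ V)
    (ls : List ℕ) : Prop :=
  ls.Pairwise (· ≥ ·) ∧ (∀ a ∈ ls, 0 < a) ∧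
  ∀ j : ℕ, ls.countP (fun a => decide (j + 1 ≤ a)) =
    Module.finrank ℂ (LinearMap.range (f ^ j)) -
      Module.finrank ℂ (LinearMap.range (f ^ (j + 1)))

namespace LeibnizSuper

variable {L : Type*} [AddCommGroup L] [Module ℂ L] (S : LeibnizSuper L)

/-- The span of all brackets `[a,b]`, `a ∈ p`, `b ∈ q`. -/
def bracketSpan (p q : Submodule ℂ L) : Submodule ℂ L :=
  Submodule.span ℂ {z | ∃ a ∈ p, ∃ b ∈ q, z = S.bracket a b}

/-- Descending central series; `S.term k` is `L^{k+1}` (so `S.term 0 = L¹ = L`). -/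
def term : ℕ → Submodule ℂ L
  | 0 => ⊤
  | k + 1 => S.bracketSpan (term k) ⊤

/-- `S.HasNilindex s` : `s` is the minimal natural number with `L^s = 0`. -/
def HasNilindex (s : ℕ) : Prop :=
  0 < s ∧ S.term (s - 1) = ⊥ ∧ ∀ t : ℕ, t + 1 < s → S.term t ≠ ⊥

/-- The superalgebra is nilpotent. -/
def IsNilpotentSuper : Prop := ∃ s, S.term s = ⊥

/-- Right multiplication operator `R_x z = [z, x]`. -/
def R (x : L) : Module.End ℂ L := S.bracket.flip x

/-- Restriction of `R_x` (for `x ∈ L₀`) to the even part `L₀`. -/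
def R0 (x : L) (hx : x ∈ S.L0) : Module.End ℂ S.L0 :=
  (S.R x).restrict (fun z hz => S.g00 z hz x hx)

/-- Restriction of `R_x` (for `x ∈ L₀`) to the odd part `L₁`. -/
def R1 (x : L) (hx : x ∈ S.L0) : Module.End ℂ S.L1 :=
  (S.R x).restrict (fun z hz => S.g10 z hz x hx)

/-- `S.HasCharSeq ns ms` : the characteristic sequence of `S` is `(ns | ms)`, i.e.
`ns` (resp. `ms`) is the lexicographically maximal sequence of Jordan block sizes of
`R_x` restricted to `L₀` (resp. `L₁`) over all `x ∈ L₀ ∖ [L₀, L₀]`. -/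
def HasCharSeq (ns ms : List ℕ) : Prop :=
  (∃ x, ∃ hx : x ∈ S.L0, x ∉ S.bracketSpan S.L0 S.L0 ∧ HasJordanType (S.R0 x hx) ns) ∧
  (∀ x, ∀ hx : x ∈ S.L0, x ∉ S.bracketSpan S.L0 S.L0 →
    ∀ ls, HasJordanType (S.R0 x hx) ls → ls = ns ∨ List.Lex (· < ·) ls ns) ∧
  (∃ x, ∃ hx : x ∈ S.L0, x ∉ S.bracketSpan S.L0 S.L0 ∧ HasJordanType (S.R1 x hx) ms) ∧
  (∀ x, ∀ hx : x ∈ S.L0, x ∉ S.bracketSpan S.L0 S.L0 →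
    ∀ ls, HasJordanType (S.R1 x hx) ls → ls = ms ∨ List.Lex (· < ·) ls ms)

/-- `S ∈ ZF^{n,m}` : `S` is zero-filiform with `dim L₀ = n`, `dim L₁ = m`. -/
def ZeroFiliform (n m : ℕ) : Prop :=
  Module.finrank ℂ S.L0 = n ∧ Module.finrank ℂ S.L1 = m ∧ S.HasCharSeq [n] [m]

/-- A graded subalgebra: a submodule closed under the bracket which is the sum of
its intersections with the even and the odd parts. -/
def IsGradedSubalgebra (p : Submodule ℂ L) : Prop :=
  (∀ a ∈ p, ∀ b ∈ p, S.bracket a b ∈ p) ∧ p = p ⊓ S.L0 ⊔ p ⊓ S.L1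

/-- `A` generates the superalgebra: the smallest graded subalgebra containing `A` is `L`. -/
def Generates (A : Set L) : Prop :=
  ∀ p : Submodule ℂ L, S.IsGradedSubalgebra p → A ⊆ p → p = ⊤

/-- An adapted basis `{x₁,…,x_n, y₁,…,y_m}` of a zero-filiform Leibniz superalgebra
(1-based indexing). -/
def IsAdaptedPair (n m : ℕ) (x y : ℕ → L) : Prop :=
  (∀ i, 1 ≤ i → i ≤ n → x i ∈ S.L0) ∧
  (∀ j, 1 ≤ j → j ≤ m → y j ∈ S.L1) ∧
  LinearIndependent ℂ
    (Sum.elim (fun i : Fin n => x ((i : ℕ) + 1)) (fun j : Fin m => y ((j : ℕ) + 1))) ∧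
  Submodule.span ℂ (Set.range
    (Sum.elim (fun i : Fin n => x ((i : ℕ) + 1)) (fun j : Fin m => y ((j : ℕ) + 1)))) = ⊤ ∧
  (∀ i, 1 ≤ i → i ≤ n - 1 → S.bracket (x i) (x 1) = x (i + 1)) ∧
  S.bracket (x n) (x 1) = 0 ∧
  (∀ i k, 1 ≤ i → i ≤ n → 2 ≤ k → k ≤ n → S.bracket (x i) (x k) = 0) ∧
  (∀ j, 1 ≤ j → j ≤ m - 1 → S.bracket (y j) (x 1) = y (j + 1)) ∧
  S.bracket (y m) (x 1) = 0 ∧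
  (∀ j k, 1 ≤ j → j ≤ m → 2 ≤ k → k ≤ n → S.bracket (y j) (x k) = 0)

end LeibnizSuper

/-! Writing `L^{k+1}` for `S.term k`, the super Leibniz identity gives
`[L^i, L^j] ⊆ L^{i+j}`. Nilindex `dim L + 1` forces the central series to drop by exactly
one dimension at each step, so `L = ℂe + L²` for a homogeneous `e`, and then
`L^k = ℂ R_e^{k-1} e + L^{k+1}` for every `k`: the vectors
`v_i = R_e^i e` (`S.rightIter e i`) form a basis.
The Leibniz identity determines the remaining products `[v_i, v_j]` recursively from
`[v_i, v_1] = [v_i, [e, e]]`, which is `0` if `e` is even and `2 v_{i+2}` if `e` is odd; in the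
odd case the `v_i` alternate between `L₁` and `L₀`, which fixes `dim L₀` and `dim L₁`. -/

lemma Module.Basis.card_le_finrank_of_mem {K V ι κ : Type*} [Field K] [AddCommGroup V]
    [Module K V] [FiniteDimensional K V] [Fintype κ] (b : Module.Basis ι K V)
    {p : Submodule K V} (g : κ ↪ ι) (h : ∀ k, b (g k) ∈ p) :
    Fintype.card κ ≤ Module.finrank K p :=
  (LinearIndependent.of_comp p.subtype (v := fun k => ⟨b (g k), h k⟩)
    (by exact b.linearIndependent.comp g g.injective)).fintype_card_le_finrank

namespace LeibnizSuper

variable {L : Type*} [AddCommGroup L] [Module ℂ L] (S : LeibnizSuper L)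

section Graded

lemma bracket_mem_bracketSpan {p q : Submodule ℂ L} {a b : L} (ha : a ∈ p) (hb : b ∈ q) :
    S.bracket a b ∈ S.bracketSpan p q :=
  Submodule.subset_span ⟨a, ha, b, hb, rfl⟩

lemma bracketSpan_le {p q r : Submodule ℂ L} (h : ∀ a ∈ p, ∀ b ∈ q, S.bracket a b ∈ r) :
    S.bracketSpan p q ≤ r :=
  Submodule.span_le.mpr fun _ ⟨a, ha, b, hb, hz⟩ => hz ▸ h a ha b hb

def IsHomogeneous (x : L) : Prop := x ∈ S.L0 ∨ x ∈ S.L1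

def IsGraded (p : Submodule ℂ L) : Prop := p ≤ p ⊓ S.L0 ⊔ p ⊓ S.L1

variable {S}

lemma IsHomogeneous.bracket {x y : L} (hx : S.IsHomogeneous x) (hy : S.IsHomogeneous y) :
    S.IsHomogeneous (S.bracket x y) := by
  rcases hx with hx | hx <;> rcases hy with hy | hy
  exacts [.inl (S.g00 x hx y hy), .inr (S.g01 x hx y hy), .inr (S.g10 x hx y hy),
    .inl (S.g11 x hx y hy)]

lemma IsHomogeneous.mem_sup_inf {p : Submodule ℂ L} {x : L} (hx : S.IsHomogeneous x)
    (hp : x ∈ p) : x ∈ p ⊓ S.L0 ⊔ p ⊓ S.L1 := by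
  rcases hx with hx | hx
  exacts [Submodule.mem_sup_left ⟨hp, hx⟩, Submodule.mem_sup_right ⟨hp, hx⟩]

variable (S) in
lemma isGraded_top : S.IsGraded ⊤ := by
  rw [IsGraded, top_inf_eq, top_inf_eq, S.compl.sup_eq_top]

lemma IsGraded.map₂_mem {M : Type*} [AddCommGroup M] [Module ℂ M]
    (f : L →ₗ[ℂ] L →ₗ[ℂ] M) {p q : Submodule ℂ L} {r : Submodule ℂ M}
    (hp : S.IsGraded p) (hq : S.IsGraded q)
    (h : ∀ a ∈ p, ∀ b ∈ q, S.IsHomogeneous a → S.IsHomogeneous b → f a b ∈ r)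
    {a b : L} (ha : a ∈ p) (hb : b ∈ q) : f a b ∈ r := by
  obtain ⟨a₀, ha₀, a₁, ha₁, rfl⟩ := Submodule.mem_sup.mp (hp ha)
  obtain ⟨b₀, hb₀, b₁, hb₁, rfl⟩ := Submodule.mem_sup.mp (hq hb)
  simp only [map_add, LinearMap.add_apply]
  exact add_mem (add_mem (h _ ha₀.1 _ hb₀.1 (.inl ha₀.2) (.inl hb₀.2))
      (h _ ha₁.1 _ hb₀.1 (.inr ha₁.2) (.inl hb₀.2)))
    (add_mem (h _ ha₀.1 _ hb₁.1 (.inl ha₀.2) (.inr hb₁.2))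
      (h _ ha₁.1 _ hb₁.1 (.inr ha₁.2) (.inr hb₁.2)))

lemma IsGraded.bracketSpan {p q : Submodule ℂ L} (hp : S.IsGraded p) (hq : S.IsGraded q) :
    S.IsGraded (S.bracketSpan p q) :=
  S.bracketSpan_le fun _ ha _ hb => hp.map₂_mem S.bracket hq
    (fun _ ha _ hb ha_hom hb_hom =>
      (ha_hom.bracket hb_hom).mem_sup_inf (S.bracket_mem_bracketSpan ha hb))
    ha hb

variable (S) in
lemma isGraded_term : ∀ k, S.IsGraded (S.term k)
  | 0 => S.isGraded_top
  | k + 1 => (isGraded_term k).bracketSpan S.isGraded_top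

lemma bracket_bracket_mem (x : L) {y z : L} (hy : S.IsHomogeneous y) (hz : S.IsHomogeneous z)
    {p : Submodule ℂ L} (h₁ : S.bracket (S.bracket x y) z ∈ p)
    (h₂ : S.bracket (S.bracket x z) y ∈ p) : S.bracket x (S.bracket y z) ∈ p := by
  rcases hy with hy | hy <;> rcases hz with hz | hz
  · rw [S.leib00 x y hy z hz]; exact sub_mem h₁ h₂
  · rw [S.leib01 x y hy z hz]; exact sub_mem h₁ h₂
  · rw [S.leib10 x y hy z hz]; exact sub_mem h₁ h₂
  · rw [S.leib11 x y hy z hz]; exact add_mem h₁ h₂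

end Graded

section CentralSeries

lemma term_succ_le : ∀ k, S.term (k + 1) ≤ S.term k
  | 0 => le_top
  | k + 1 => Submodule.span_mono fun _ ⟨a, ha, b, hb, hz⟩ =>
    ⟨a, term_succ_le k ha, b, hb, hz⟩

lemma term_antitone : Antitone S.term :=
  antitone_nat_of_succ_le S.term_succ_le

lemma bracket_mem_term {i j : ℕ} {a b : L} (ha : a ∈ S.term i) (hb : b ∈ S.term j) :
    S.bracket a b ∈ S.term (i + j + 1) := by
  induction j generalizing i a b with
  | zero => exact S.bracket_mem_bracketSpan ha Submodule.mem_top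
  | succ j ih =>
    have hspan :
        S.bracketSpan (S.term j) ⊤ ≤ (S.term (i + (j + 1) + 1)).comap (S.bracket a) := by
      refine S.bracketSpan_le fun _ hu _ _ => ?_
      refine (S.isGraded_term j).map₂_mem (S.bracket.compr₂ (S.bracket a))
        (r := S.term (i + (j + 1) + 1)) S.isGraded_top (fun u hu w _ hu_hom hw_hom => ?_) hu
        Submodule.mem_top
      rw [LinearMap.compr₂_apply]
      have haw : S.bracket a w ∈ S.term (i + 1) := S.bracket_mem_bracketSpan ha Submodule.mem_top
      refine S.bracket_bracket_mem a hu_hom hw_hom ?_ ?_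
      · exact S.bracket_mem_bracketSpan (ih ha hu) Submodule.mem_top
      · rw [Nat.add_right_comm i, ← Nat.add_assoc]
        exact ih haw hu
    exact hspan hb

lemma term_add_eq_of_term_succ_eq {k : ℕ} (h : S.term (k + 1) = S.term k) :
    ∀ j, S.term (k + j) = S.term k
  | 0 => rfl
  | j + 1 => by
    change S.bracketSpan (S.term (k + j)) ⊤ = S.term k
    rw [term_add_eq_of_term_succ_eq h j]
    exact h

lemma term_succ_lt {N k : ℕ} (hnil : S.HasNilindex (N + 1)) (hk : k < N) :
    S.term (k + 1) < S.term k := by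
  refine (S.term_succ_le k).lt_of_ne fun h => hnil.2.2 k (by omega) ?_
  rw [← S.term_add_eq_of_term_succ_eq h (N - k), Nat.add_sub_cancel' hk.le]
  exact hnil.2.1

lemma le_add_finrank_term [FiniteDimensional ℂ L] {N : ℕ} (hnil : S.HasNilindex (N + 1))
    (k : ℕ) : N ≤ k + Module.finrank ℂ (S.term k) := by
  suffices ∀ d k, N ≤ k + d → N ≤ k + Module.finrank ℂ (S.term k) from this N k (by omega)
  intro d
  induction d with
  | zero => intro k hk; omega
  | succ d ih =>
    intro k hk
    rcases le_or_gt N k with hNk | hkN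
    · omega
    · have hlt := Submodule.finrank_lt_finrank_of_lt (S.term_succ_lt hnil hkN)
      have hle := ih (k + 1) (by omega)
      omega

lemma exists_isHomogeneous_span_sup_term_one_eq_top [FiniteDimensional ℂ L]
    (h : Module.finrank ℂ L ≤ Module.finrank ℂ (S.term 1) + 1) :
    ∃ e, S.IsHomogeneous e ∧ Submodule.span ℂ {e} ⊔ S.term 1 = ⊤ := by
  by_cases h1 : S.term 1 = ⊤
  · exact ⟨0, .inl (zero_mem _), by rw [h1, sup_top_eq]⟩
  obtain ⟨e, he, heT⟩ : ∃ e, S.IsHomogeneous e ∧ e ∉ S.term 1 := by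
    by_contra! hall
    refine h1 (eq_top_iff.mpr ?_)
    rw [← S.compl.sup_eq_top]
    exact sup_le (fun x hx => hall x (.inl hx)) (fun x hx => hall x (.inr hx))
  have hlt : S.term 1 < Submodule.span ℂ {e} ⊔ S.term 1 :=
    le_sup_right.lt_of_ne fun h => heT (h ▸ Submodule.mem_sup_left
      (Submodule.mem_span_singleton_self e))
  have := Submodule.finrank_lt_finrank_of_lt hlt
  exact ⟨e, he,
    Submodule.eq_top_of_finrank_eq (le_antisymm (Submodule.finrank_le _) (by omega))⟩

end CentralSeries

section RightIter

def rightIter (e : L) : ℕ → L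
  | 0 => e
  | i + 1 => S.bracket (rightIter e i) e

variable {S} {e : L}

lemma rightIter_mem_term (e : L) : ∀ i, S.rightIter e i ∈ S.term i
  | 0 => Submodule.mem_top
  | i + 1 => S.bracket_mem_bracketSpan (rightIter_mem_term e i) Submodule.mem_top

lemma rightIter_eq_zero {N i : ℕ} (hbot : S.term N = ⊥) (hi : N ≤ i) :
    S.rightIter e i = 0 := by
  simpa [hbot] using S.term_antitone hi (S.rightIter_mem_term e i)

lemma rightIter_mem_L0 (he : e ∈ S.L0) : ∀ i, S.rightIter e i ∈ S.L0
  | 0 => he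
  | i + 1 => S.g00 _ (rightIter_mem_L0 he i) e he

lemma rightIter_mem_of_mem_L1 (he : e ∈ S.L1) :
    ∀ i, (i % 2 = 0 → S.rightIter e i ∈ S.L1) ∧ (i % 2 = 1 → S.rightIter e i ∈ S.L0)
  | 0 => ⟨fun _ => he, by omega⟩
  | i + 1 =>
    ⟨fun _ => S.g01 _ ((rightIter_mem_of_mem_L1 he i).2 (by omega)) e he,
      fun _ => S.g11 _ ((rightIter_mem_of_mem_L1 he i).1 (by omega)) e he⟩

lemma IsHomogeneous.rightIter (he : S.IsHomogeneous e) (i : ℕ) :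
    S.IsHomogeneous (S.rightIter e i) := by
  rcases he with he | he
  · exact .inl (rightIter_mem_L0 he i)
  · rcases Nat.mod_two_eq_zero_or_one i with hi | hi
    exacts [.inr ((rightIter_mem_of_mem_L1 he i).1 hi),
      .inl ((rightIter_mem_of_mem_L1 he i).2 hi)]

/-- `v_{j+1} = [v_j, e]`, and the Leibniz identity expresses `[v_i, [v_j, e]]` through
`[v_i, v_j]` and `[v_{i+1}, v_j]`. -/
lemma bracket_rightIter_eq_zero_of_le (he : S.IsHomogeneous e) {j₀ j : ℕ}
    (h : ∀ i, S.bracket (S.rightIter e i) (S.rightIter e j₀) = 0) (hj : j₀ ≤ j) (i : ℕ) :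
    S.bracket (S.rightIter e i) (S.rightIter e j) = 0 := by
  induction j, hj using Nat.le_induction generalizing i with
  | base => exact h i
  | succ j _ ih =>
    rw [← Submodule.mem_bot ℂ]
    refine S.bracket_bracket_mem _ (he.rightIter j) he ?_ ?_
    · rw [ih i, map_zero, LinearMap.zero_apply]; exact zero_mem _
    · exact (ih (i + 1)).symm ▸ zero_mem _

lemma bracket_rightIter_one_of_mem_L0 (he : e ∈ S.L0) (i : ℕ) :
    S.bracket (S.rightIter e i) (S.rightIter e 1) = 0 := by
  change S.bracket _ (S.bracket e e) = 0
  rw [S.leib00 _ e he e he, sub_self]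

lemma bracket_rightIter_one_of_mem_L1 (he : e ∈ S.L1) (i : ℕ) :
    S.bracket (S.rightIter e i) (S.rightIter e 1) = (2 : ℂ) • S.rightIter e (i + 2) := by
  change S.bracket _ (S.bracket e e) = _
  rw [S.leib11 _ e he e he, two_smul]
  rfl

lemma bracket_rightIter_two_of_mem_L1 (he : e ∈ S.L1) (i : ℕ) :
    S.bracket (S.rightIter e i) (S.rightIter e 2) = 0 := by
  change S.bracket _ (S.bracket (S.rightIter e 1) e) = 0
  rw [S.leib01 _ _ ((rightIter_mem_of_mem_L1 he 1).2 rfl) e he,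
    bracket_rightIter_one_of_mem_L1 he]
  change _ - S.bracket (S.rightIter e (i + 1)) (S.rightIter e 1) = 0
  rw [bracket_rightIter_one_of_mem_L1 he, map_smul, LinearMap.smul_apply]
  exact sub_self _

lemma bracket_rightIter_mem (htop : Submodule.span ℂ {e} ⊔ S.term 1 = ⊤) (k : ℕ) (b : L) :
    S.bracket (S.rightIter e k) b ∈
      Submodule.span ℂ {S.rightIter e (k + 1)} ⊔ S.term (k + 2) := by
  obtain ⟨b₀, hb₀, b₁, hb₁, rfl⟩ :=
    Submodule.mem_sup.mp (htop ▸ Submodule.mem_top : b ∈ _)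
  obtain ⟨c, rfl⟩ := Submodule.mem_span_singleton.mp hb₀
  rw [map_add, map_smul]
  exact add_mem (Submodule.mem_sup_left (Submodule.smul_mem _ c
    (Submodule.mem_span_singleton_self _))) (Submodule.mem_sup_right
      (S.bracket_mem_term (S.rightIter_mem_term e k) hb₁))

lemma term_le_span_rightIter_sup (htop : Submodule.span ℂ {e} ⊔ S.term 1 = ⊤) :
    ∀ k, S.term k ≤ Submodule.span ℂ {S.rightIter e k} ⊔ S.term (k + 1)
  | 0 => htop.ge
  | k + 1 => S.bracketSpan_le fun a ha b _ => by
    obtain ⟨a₀, ha₀, a₁, ha₁, rfl⟩ :=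
      Submodule.mem_sup.mp (term_le_span_rightIter_sup htop k ha)
    obtain ⟨c, rfl⟩ := Submodule.mem_span_singleton.mp ha₀
    rw [map_add, map_smul, LinearMap.add_apply, LinearMap.smul_apply]
    exact add_mem (Submodule.smul_mem _ c (bracket_rightIter_mem htop k b))
      (Submodule.mem_sup_right (S.bracket_mem_bracketSpan ha₁ Submodule.mem_top))

lemma top_le_span_rightIter_sup_term (htop : Submodule.span ℂ {e} ⊔ S.term 1 = ⊤) :
    ∀ j, ⊤ ≤ Submodule.span ℂ (Set.range fun i : Fin j => S.rightIter e i) ⊔ S.term j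
  | 0 => le_sup_right
  | j + 1 => by
    have hspan : Submodule.span ℂ (Set.range fun i : Fin j => S.rightIter e i) ⊔
        Submodule.span ℂ {S.rightIter e j} ≤
        Submodule.span ℂ (Set.range fun i : Fin (j + 1) => S.rightIter e i) :=
      sup_le (Submodule.span_mono fun _ ⟨i, hi⟩ => ⟨i.castSucc, hi⟩)
        (Submodule.span_mono (Set.singleton_subset_iff.mpr ⟨Fin.last j, rfl⟩))
    calc ⊤ ≤ Submodule.span ℂ (Set.range fun i : Fin j => S.rightIter e i) ⊔ S.term j :=
          top_le_span_rightIter_sup_term htop j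
      _ ≤ Submodule.span ℂ (Set.range fun i : Fin j => S.rightIter e i) ⊔
          (Submodule.span ℂ {S.rightIter e j} ⊔ S.term (j + 1)) :=
          sup_le_sup_left (term_le_span_rightIter_sup htop j) _
      _ ≤ _ := by rw [← sup_assoc]; exact sup_le_sup_right hspan _

end RightIter

section Classification

variable {S} {e : L}

lemma exists_basis_rightIter {N : ℕ} (hN : Module.finrank ℂ L = N)
    (htop : Submodule.span ℂ {e} ⊔ S.term 1 = ⊤) (hbot : S.term N = ⊥) :
    ∃ b : Module.Basis (Fin N) ℂ L, ∀ i, b i = S.rightIter e i :=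
  ⟨basisOfTopLeSpanOfCardEqFinrank (fun i : Fin N => S.rightIter e i)
    (by simpa [hbot] using top_le_span_rightIter_sup_term htop N) (by rw [Fintype.card_fin, hN]),
    fun i => congrFun (coe_basisOfTopLeSpanOfCardEqFinrank _ _ _) i⟩

lemma exists_basis_of_mem_L0 {N : ℕ} (hN : Module.finrank ℂ L = N)
    (htop : Submodule.span ℂ {e} ⊔ S.term 1 = ⊤) (hbot : S.term N = ⊥) (he : e ∈ S.L0) :
    S.L1 = ⊥ ∧ ∃ b : Module.Basis (Fin N) ℂ L, (∀ i, b i ∈ S.L0) ∧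
      ∀ i j : Fin N, S.bracket (b i) (b j) =
        if h : (j : ℕ) = 0 ∧ (i : ℕ) + 1 < N then b ⟨(i : ℕ) + 1, h.2⟩ else 0 := by
  obtain ⟨b, hb⟩ := exists_basis_rightIter hN htop hbot
  have hL0 : ∀ i, b i ∈ S.L0 := fun i => hb i ▸ rightIter_mem_L0 he i
  have hL0_top : S.L0 = ⊤ := by
    rw [eq_top_iff, ← b.span_eq]
    exact Submodule.span_le.mpr (Set.range_subset_iff.mpr hL0)
  refine ⟨S.compl.disjoint.eq_bot_of_ge (hL0_top ▸ le_top), b, hL0, fun i j => ?_⟩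
  simp only [hb]
  split_ifs with h
  · rw [h.1]; rfl
  · rcases Nat.eq_zero_or_pos j with hj | hj
    · rw [hj]; exact rightIter_eq_zero (i := i + 1) hbot (by omega)
    · exact bracket_rightIter_eq_zero_of_le (.inl he) (bracket_rightIter_one_of_mem_L0 he) hj i

lemma exists_basis_of_mem_L1 {N : ℕ} (hN : Module.finrank ℂ L = N)
    (htop : Submodule.span ℂ {e} ⊔ S.term 1 = ⊤) (hbot : S.term N = ⊥) (he : e ∈ S.L1) :
    ∃ b : Module.Basis (Fin N) ℂ L,
      (∀ i : Fin N, if (i : ℕ) % 2 = 0 then b i ∈ S.L1 else b i ∈ S.L0) ∧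
      ∀ i j : Fin N, S.bracket (b i) (b j) =
        if h : (j : ℕ) = 0 ∧ (i : ℕ) + 1 < N then b ⟨(i : ℕ) + 1, h.2⟩
        else if h2 : (j : ℕ) = 1 ∧ (i : ℕ) + 2 < N then
          (2 : ℂ) • b ⟨(i : ℕ) + 2, h2.2⟩
        else 0 := by
  obtain ⟨b, hb⟩ := exists_basis_rightIter hN htop hbot
  refine ⟨b, fun i => ?_, fun i j => ?_⟩
  · rw [hb]
    split_ifs with h
    exacts [(rightIter_mem_of_mem_L1 he i).1 h, (rightIter_mem_of_mem_L1 he i).2 (by omega)]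
  simp only [hb]
  split_ifs with h₀ h₁
  · rw [h₀.1]; rfl
  · rw [h₁.1]; exact bracket_rightIter_one_of_mem_L1 he i
  · obtain hj | hj | hj : (j : ℕ) = 0 ∨ (j : ℕ) = 1 ∨ 2 ≤ (j : ℕ) := by omega
    · rw [hj]; exact rightIter_eq_zero (i := i + 1) hbot (by omega)
    · rw [hj, bracket_rightIter_one_of_mem_L1 he, rightIter_eq_zero hbot (by omega), smul_zero]
    · exact bracket_rightIter_eq_zero_of_le (.inr he) (bracket_rightIter_two_of_mem_L1 he) hj i

lemma finrank_eq_of_alternating_basis [FiniteDimensional ℂ L] {n m : ℕ}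
    (hn : Module.finrank ℂ S.L0 = n) (hm : Module.finrank ℂ S.L1 = m)
    (b : Module.Basis (Fin (n + m)) ℂ L)
    (hb : ∀ i : Fin (n + m), if (i : ℕ) % 2 = 0 then b i ∈ S.L1 else b i ∈ S.L0) :
    (Even (n + m) → m = n) ∧ (Odd (n + m) → m = n + 1) := by
  have hm_ge : (n + m + 1) / 2 ≤ m := by
    simpa [hm] using b.card_le_finrank_of_mem (p := S.L1)
      ⟨fun k : Fin ((n + m + 1) / 2) => ⟨2 * k, by omega⟩,
        fun k l hkl => Fin.ext (by simpa using congrArg Fin.val hkl)⟩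
      (fun k => by
        have hk := hb ⟨2 * k, by omega⟩
        simp only [Nat.mul_mod_right, if_pos] at hk
        exact hk)
  have hn_ge : (n + m) / 2 ≤ n := by
    simpa [hn] using b.card_le_finrank_of_mem (p := S.L0)
      ⟨fun k : Fin ((n + m) / 2) => ⟨2 * k + 1, by omega⟩,
        fun k l hkl => Fin.ext (by simpa using congrArg Fin.val hkl)⟩
      (fun k => by
        have hk := hb ⟨2 * k + 1, by omega⟩
        simp only [Nat.mul_add_mod] at hk
        exact hk)
  constructor <;> rintro ⟨k, hk⟩ <;> omega

end Classification

end LeibnizSuper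

open LeibnizSuper in
/-- Basis indices are 0-based: `e i` is the paper's `e_{i+1}`. -/
theorem nilindex_max_classification {L : Type*} [AddCommGroup L] [Module ℂ L]
    [FiniteDimensional ℂ L] (S : LeibnizSuper L) (n m : ℕ)
    (hn : Module.finrank ℂ S.L0 = n) (hm : Module.finrank ℂ S.L1 = m)
    (hnil : S.HasNilindex (n + m + 1)) :
    (m = 0 ∧ ∃ e : Module.Basis (Fin n) ℂ L, (∀ i, e i ∈ S.L0) ∧
      ∀ i j : Fin n, S.bracket (e i) (e j) =
        if h : (j : ℕ) = 0 ∧ (i : ℕ) + 1 < n then e ⟨(i : ℕ) + 1, h.2⟩ else 0) ∨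
    (∃ e : Module.Basis (Fin (n + m)) ℂ L,
      (∀ i : Fin (n + m), if (i : ℕ) % 2 = 0 then e i ∈ S.L1 else e i ∈ S.L0) ∧
      (∀ i j : Fin (n + m), S.bracket (e i) (e j) =
        if h : (j : ℕ) = 0 ∧ (i : ℕ) + 1 < n + m then e ⟨(i : ℕ) + 1, h.2⟩
        else if h2 : (j : ℕ) = 1 ∧ (i : ℕ) + 2 < n + m then
          (2 : ℂ) • e ⟨(i : ℕ) + 2, h2.2⟩
        else 0) ∧
      (Even (n + m) → m = n) ∧ (Odd (n + m) → m = n + 1)) := by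
  have hN : Module.finrank ℂ L = n + m := by
    rw [← Submodule.finrank_add_eq_of_isCompl S.compl, hn, hm]
  have hbot : S.term (n + m) = ⊥ := hnil.2.1
  obtain ⟨e, he, htop⟩ := S.exists_isHomogeneous_span_sup_term_one_eq_top
    (by have := S.le_add_finrank_term hnil 1; omega)
  rcases he with he | he
  · obtain ⟨hL1, hb⟩ := exists_basis_of_mem_L0 hN htop hbot he
    obtain rfl : m = 0 := by rw [← hm, hL1, finrank_bot]
    exact .inl ⟨rfl, hb⟩
  · obtain ⟨b, hpar, hbr⟩ := exists_basis_of_mem_L1 hN htop hbot he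
    exact .inr ⟨b, hpar, hbr, finrank_eq_of_alternating_basis hn hm b hpar⟩
end

section
/- In an arbitrary zero-filiform Leibniz superalgebra L ∈ ZF^{n,m} there exists a basis {x₁,…,x_n, y₁,…,y_m} with x_i ∈ L₀ and y_j ∈ L₁ satisfying: [x_i,x₁]=x_{i+1} for 1 ≤ i ≤ n−1, [x_n,x₁]=0, [x_i,x_k]=0 for 1 ≤ i ≤ n and 2 ≤ k ≤ n, [y_j,x₁]=y_{j+1} for 1 ≤ j ≤ m−1, [y_m,x₁]=0, and [y_j,x_k]=0 for 1 ≤ j ≤ m and 2 ≤ k ≤ n. -/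
/-!
Choose `x ∈ L₀ ∖ [L₀, L₀]` for which `R_x` is a single Jordan block on `L₀`. For a single block
`ker R_x^(n-1) = range R_x ⊆ [L₀, L₀]`, so `x` itself is a cyclic vector and `x_i = R_x^(i-1) x`
is a basis of `L₀`. The Leibniz identity gives `[a, [x, x]] = 0`, and inductively every `x_i` with
`i ≥ 2` right-annihilates `L`. Hence `R_{x'} = c R_x` for all `x' ∈ L₀`, with `c ≠ 0` when
`x' ∉ [L₀, L₀]`; so `R_x` is a single Jordan block on `L₁` as well, and `y_j = R_x^(j-1) y₁` for a
cyclic vector `y₁`.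
-/

open Module LinearMap

theorem Module.End.coe_pow_restrict_apply {R M : Type*} [Semiring R] [AddCommMonoid M]
    [Module R M] {p : Submodule R M} (f : Module.End R M) (h : ∀ x ∈ p, f x ∈ p) (n : ℕ)
    (z : p) : (((f.restrict h) ^ n) z : M) = (f ^ n) z := by
  rw [Module.End.pow_restrict]
  rfl

section NilpotentChain

variable {K V : Type*} [Field K] [AddCommGroup V] [Module K V]

theorem linearIndependent_pow_apply {f : Module.End K V} {v : V} {k : ℕ}
    (hk : (f ^ k) v = 0) (hv : (f ^ (k - 1)) v ≠ 0) :
    LinearIndependent K (fun i : Fin k => (f ^ (i : ℕ)) v) := by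
  induction k generalizing v with
  | zero => exact linearIndependent_empty_type
  | succ k ih =>
    rcases k with _ | k
    · simpa [linearIndependent_unique_iff] using hv
    have hchain : (fun i : Fin (k + 2) => (f ^ (i : ℕ)) v) =
        Fin.cons v (fun i : Fin (k + 1) => (f ^ (i : ℕ)) (f v)) := by
      ext i
      refine Fin.cases ?_ (fun i => ?_) i <;> simp [pow_succ]
    have hpow : ∀ j, (f ^ j) (f v) = (f ^ (j + 1)) v := fun j => by rw [pow_succ]; rfl
    rw [hchain, linearIndependent_finCons]
    refine ⟨ih (by rwa [hpow]) (by simpa [hpow] using hv), fun hmem => hv ?_⟩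
    have htail : Submodule.span K (Set.range fun i : Fin (k + 1) => (f ^ (i : ℕ)) (f v)) ≤
        ker (f ^ (k + 1)) := by
      rw [Submodule.span_le]
      rintro _ ⟨i, rfl⟩
      rw [SetLike.mem_coe, mem_ker, ← Module.End.mul_apply, pow_mul_comm, Module.End.mul_apply,
        hpow, hk, map_zero]
    exact htail hmem

theorem span_pow_apply_eq {f : Module.End K V} {p : Submodule K V} [FiniteDimensional K p]
    (hp : ∀ x ∈ p, f x ∈ p) {v : V} (hvp : v ∈ p) {k : ℕ} (hdim : finrank K p = k)
    (hk : (f ^ k) v = 0) (hv : (f ^ (k - 1)) v ≠ 0) :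
    Submodule.span K (Set.range fun i : Fin k => (f ^ (i : ℕ)) v) = p := by
  refine Submodule.eq_of_le_of_finrank_eq ?_ ?_
  · rw [Submodule.span_le]
    rintro _ ⟨i, rfl⟩
    exact Module.End.pow_apply_mem_of_forall_mem _ hp v hvp
  · rw [finrank_span_eq_card (linearIndependent_pow_apply hk hv), Fintype.card_fin, hdim]

end NilpotentChain

namespace HasJordanType

variable {V : Type*} [AddCommGroup V] [Module ℂ V] {f : Module.End ℂ V} {k : ℕ}

theorem smul_iff {c : ℂ} (hc : c ≠ 0) {ls : List ℕ} :
    HasJordanType (c • f) ls ↔ HasJordanType f ls := by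
  have hrank : ∀ j, finrank ℂ (range ((c • f) ^ j)) = finrank ℂ (range (f ^ j)) := fun j => by
    rw [smul_pow, range_smul _ _ (pow_ne_zero j hc)]
  simp only [HasJordanType, hrank]

theorem pos_of_singleton (h : HasJordanType f [k]) : 0 < k :=
  h.2.1 k List.mem_cons_self

theorem finrank_range_pow_of_singleton (hdim : finrank ℂ V = k) (h : HasJordanType f [k])
    {j : ℕ} (hj : j ≤ k) : finrank ℂ (range (f ^ j)) = k - j := by
  induction j with
  | zero => rw [pow_zero, Module.End.one_eq_id, range_id, finrank_top, hdim, Nat.sub_zero]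
  | succ j ih =>
    have hcount := h.2.2 j
    rw [List.countP_singleton, decide_eq_true hj, if_pos rfl] at hcount
    have := ih (by omega)
    omega

theorem pow_eq_zero_of_singleton [FiniteDimensional ℂ V] (hdim : finrank ℂ V = k)
    (h : HasJordanType f [k]) : f ^ k = 0 := by
  rw [← range_eq_bot, ← Submodule.finrank_eq_zero, h.finrank_range_pow_of_singleton hdim le_rfl,
    Nat.sub_self]

theorem pow_pred_ne_zero_of_singleton (hdim : finrank ℂ V = k) (h : HasJordanType f [k]) :
    f ^ (k - 1) ≠ 0 := by
  intro hzero
  have := h.finrank_range_pow_of_singleton hdim (k.sub_le 1)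
  rw [hzero, range_zero, finrank_bot] at this
  have := h.pos_of_singleton
  omega

theorem pow_pred_apply_ne_zero_of_notMem_range [FiniteDimensional ℂ V]
    (hdim : finrank ℂ V = k) (h : HasJordanType f [k]) {v : V} (hv : v ∉ range f) :
    (f ^ (k - 1)) v ≠ 0 := by
  have hk := h.pos_of_singleton
  have hle : range f ≤ ker (f ^ (k - 1)) := by
    rintro _ ⟨u, rfl⟩
    rw [mem_ker, ← Module.End.mul_apply, ← pow_succ, Nat.sub_add_cancel hk,
      h.pow_eq_zero_of_singleton hdim, LinearMap.zero_apply]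
  have hrank : finrank ℂ (range f) = finrank ℂ (ker (f ^ (k - 1))) := by
    have := finrank_range_add_finrank_ker (f ^ (k - 1))
    rw [h.finrank_range_pow_of_singleton hdim (k.sub_le 1), hdim] at this
    have := pow_one f ▸ h.finrank_range_pow_of_singleton hdim (j := 1) hk
    omega
  rw [Submodule.eq_of_le_of_finrank_eq hle hrank] at hv
  exact fun h0 => hv (mem_ker.mpr h0)

end HasJordanType

namespace LeibnizSuper

variable {L : Type*} [AddCommGroup L] [Module ℂ L] (S : LeibnizSuper L) {x : L}

theorem R_apply (x a : L) : S.R x a = S.bracket a x := rfl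

theorem coe_R0_pow_apply (hx : x ∈ S.L0) (j : ℕ) (z : S.L0) :
    ((S.R0 x hx ^ j) z : L) = (S.R x ^ j) z :=
  Module.End.coe_pow_restrict_apply _ _ j z

theorem coe_R1_pow_apply (hx : x ∈ S.L0) (j : ℕ) (z : S.L1) :
    ((S.R1 x hx ^ j) z : L) = (S.R x ^ j) z :=
  Module.End.coe_pow_restrict_apply _ _ j z

theorem R_pow_succ_apply (x u : L) (j : ℕ) :
    (S.R x ^ (j + 1)) u = S.bracket ((S.R x ^ j) u) x := by
  rw [pow_succ', Module.End.mul_apply, R_apply]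

theorem R_pow_apply_mem_L0 (hx : x ∈ S.L0) {u : L} (hu : u ∈ S.L0) (j : ℕ) :
    (S.R x ^ j) u ∈ S.L0 :=
  Module.End.pow_apply_mem_of_forall_mem j (fun z hz => S.g00 z hz x hx) u hu

theorem R_pow_succ_apply_mem_bracketSpan (hx : x ∈ S.L0) {u : L} (hu : u ∈ S.L0) (j : ℕ) :
    (S.R x ^ (j + 1)) u ∈ S.bracketSpan S.L0 S.L0 := by
  rw [R_pow_succ_apply]
  exact Submodule.subset_span ⟨_, S.R_pow_apply_mem_L0 hx hu j, x, hx, rfl⟩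

theorem bracket_R_pow_succ_self (hx : x ∈ S.L0) (a : L) (j : ℕ) :
    S.bracket a ((S.R x ^ (j + 1)) x) = 0 := by
  induction j generalizing a with
  | zero => rw [zero_add, pow_one, R_apply, S.leib00 a x hx x hx, sub_self]
  | succ j ih =>
    rw [R_pow_succ_apply, S.leib00 a _ (S.R_pow_apply_mem_L0 hx hx _) x hx, ih, ih, map_zero,
      LinearMap.zero_apply, sub_zero]

theorem L0_le_span_singleton_sup (hx : x ∈ S.L0) {n : ℕ}
    (hspan : Submodule.span ℂ (Set.range fun i : Fin n => (S.R x ^ (i : ℕ)) x) = S.L0) :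
    S.L0 ≤ ℂ ∙ x ⊔ (S.bracketSpan S.L0 S.L0 ⊓ LinearMap.ker S.bracket.flip) := by
  intro z hz
  rw [← hspan] at hz
  refine Submodule.span_le.mpr ?_ hz
  rintro _ ⟨⟨_ | j, _⟩, rfl⟩
  · exact Submodule.mem_sup_left (by simp [Submodule.mem_span_singleton_self])
  · exact Submodule.mem_sup_right
      ⟨S.R_pow_succ_apply_mem_bracketSpan hx hx j,
        LinearMap.ext fun a => S.bracket_R_pow_succ_self hx a j⟩

theorem exists_R_eq_smul (hx : x ∈ S.L0) {n : ℕ}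
    (hspan : Submodule.span ℂ (Set.range fun i : Fin n => (S.R x ^ (i : ℕ)) x) = S.L0)
    {x' : L} (hx' : x' ∈ S.L0) (hx'B : x' ∉ S.bracketSpan S.L0 S.L0) :
    ∃ c ≠ (0 : ℂ), S.R x' = c • S.R x := by
  obtain ⟨y, hy, z, ⟨hzB, hzK⟩, rfl⟩ :=
    Submodule.mem_sup.mp (S.L0_le_span_singleton_sup hx hspan hx')
  obtain ⟨c, rfl⟩ := Submodule.mem_span_singleton.mp hy
  refine ⟨c, ?_, ?_⟩
  · rintro rfl
    exact hx'B (by simpa using hzB)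
  · change S.bracket.flip (c • x + z) = c • S.bracket.flip x
    rw [map_add, map_smul, LinearMap.mem_ker.mp hzK, add_zero]

theorem R1_eq_smul_of_R_eq_smul {x' : L} (hx : x ∈ S.L0) (hx' : x' ∈ S.L0) {c : ℂ}
    (h : S.R x' = c • S.R x) : S.R1 x' hx' = c • S.R1 x hx := by
  ext z
  change S.R x' z = c • S.R x z
  rw [h, LinearMap.smul_apply]

theorem notMem_range_R0 (hx : x ∈ S.L0) {z : S.L0}
    (hz : (z : L) ∉ S.bracketSpan S.L0 S.L0) : z ∉ LinearMap.range (S.R0 x hx) := by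
  rintro ⟨u, rfl⟩
  exact hz (Submodule.subset_span ⟨u, u.2, x, hx, rfl⟩)

theorem isAdaptedPair_of_chains [FiniteDimensional ℂ L] (hx : x ∈ S.L0) {w : L} (hw : w ∈ S.L1)
    {n m : ℕ} (hn : Module.finrank ℂ S.L0 = n) (hxn : (S.R x ^ n) x = 0)
    (hxn' : (S.R x ^ (n - 1)) x ≠ 0) (hm : Module.finrank ℂ S.L1 = m)
    (hwm : (S.R x ^ m) w = 0) (hwm' : (S.R x ^ (m - 1)) w ≠ 0) :
    S.IsAdaptedPair n m (fun i => (S.R x ^ (i - 1)) x) (fun j => (S.R x ^ (j - 1)) w) := by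
  have h0 : ∀ z ∈ S.L0, S.R x z ∈ S.L0 := fun z hz => S.g00 z hz x hx
  have h1 : ∀ z ∈ S.L1, S.R x z ∈ S.L1 := fun z hz => S.g10 z hz x hx
  have hspan0 := span_pow_apply_eq h0 hx hn hxn hxn'
  have hspan1 := span_pow_apply_eq h1 hw hm hwm hwm'
  -- `j + 1 - 1` rather than `j` matches the 1-based indexing of `IsAdaptedPair`.
  have hsucc : ∀ u j, 1 ≤ j → S.bracket ((S.R x ^ (j - 1)) u) x = (S.R x ^ (j + 1 - 1)) u := by
    intro u j hj
    rw [← R_pow_succ_apply, Nat.sub_add_cancel hj, Nat.add_sub_cancel]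
  have hlast : ∀ u k, k ≠ 0 → (S.R x ^ k) u = 0 → S.bracket ((S.R x ^ (k - 1)) u) x = 0 := by
    intro u k hk hku
    rw [hsucc u k (by omega), Nat.add_sub_cancel, hku]
  have hann : ∀ a k, 2 ≤ k → S.bracket a ((S.R x ^ (k - 1)) x) = 0 := by
    intro a k hk
    obtain ⟨j, hj⟩ : ∃ j, k - 1 = j + 1 := ⟨k - 2, by omega⟩
    rw [hj]
    exact S.bracket_R_pow_succ_self hx a j
  have hli : LinearIndependent ℂ (Sum.elim (fun i : Fin n => (S.R x ^ (i : ℕ)) x)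
      (fun j : Fin m => (S.R x ^ (j : ℕ)) w)) := by
    refine (linearIndependent_pow_apply hxn hxn').sum_type (linearIndependent_pow_apply hwm hwm') ?_
    rw [hspan0, hspan1]
    exact S.compl.disjoint
  have hspan : Submodule.span ℂ (Set.range (Sum.elim (fun i : Fin n => (S.R x ^ (i : ℕ)) x)
      (fun j : Fin m => (S.R x ^ (j : ℕ)) w))) = ⊤ := by
    rw [Set.Sum.elim_range, Submodule.span_union, hspan0, hspan1]
    exact S.compl.sup_eq_top
  refine ⟨fun i _ _ => Module.End.pow_apply_mem_of_forall_mem _ h0 x hx,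
    fun j _ _ => Module.End.pow_apply_mem_of_forall_mem _ h1 w hw, hli, hspan,
    fun i hi _ => hsucc x i hi, hlast x n (by rintro rfl; exact hxn' hxn) hxn,
    fun i k _ _ hk _ => hann _ k hk, fun j hj _ => hsucc w j hj,
    hlast w m (by rintro rfl; exact hwm' hwm) hwm, fun j k _ _ hk _ => hann _ k hk⟩

end LeibnizSuper

open LeibnizSuper in
/-- In an arbitrary zero-filiform Leibniz superalgebra `L ∈ ZF^{n,m}` there is an
adapted basis `{x₁,…,x_n, y₁,…,y_m}` (Theorem 2.2). -/
theorem exists_adapted_basis {L : Type*} [AddCommGroup L] [Module ℂ L]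
    [FiniteDimensional ℂ L] (S : LeibnizSuper L) (n m : ℕ)
    (hzf : S.ZeroFiliform n m) :
    ∃ x y : ℕ → L, S.IsAdaptedPair n m x y := by
  obtain ⟨hn, hm, ⟨x, hx, hxB, hxJ⟩, -, ⟨x', hx', hx'B, hx'J⟩, -⟩ := hzf
  have hxn : (S.R x ^ n) x = 0 := by
    rw [← S.coe_R0_pow_apply hx n ⟨x, hx⟩, hxJ.pow_eq_zero_of_singleton hn]
    rfl
  have hxn' : (S.R x ^ (n - 1)) x ≠ 0 := fun h =>
    hxJ.pow_pred_apply_ne_zero_of_notMem_range hn (S.notMem_range_R0 hx (z := ⟨x, hx⟩) hxB)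
      (Subtype.ext ((S.coe_R0_pow_apply hx _ _).trans h))
  obtain ⟨c, hc, hRc⟩ := S.exists_R_eq_smul hx
    (span_pow_apply_eq (fun z hz => S.g00 z hz x hx) hx hn hxn hxn') hx' hx'B
  have hJ : HasJordanType (S.R1 x hx) [m] := by
    rwa [S.R1_eq_smul_of_R_eq_smul hx hx' hRc, HasJordanType.smul_iff hc] at hx'J
  obtain ⟨w, hw⟩ := DFunLike.ne_iff.mp (hJ.pow_pred_ne_zero_of_singleton hm)
  have hwm : (S.R x ^ m) w = 0 := by
    rw [← S.coe_R1_pow_apply hx, hJ.pow_eq_zero_of_singleton hm]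
    rfl
  exact ⟨_, _, S.isAdaptedPair_of_chains hx w.2 hn hxn hxn' hm hwm
    fun h => hw (Subtype.ext ((S.coe_R1_pow_apply hx _ _).trans h))⟩
end

section
/- Let L ∈ ZF^{n,m} be a zero-filiform Leibniz superalgebra of nilindex n+m with an adapted basis {x₁,…,x_n,y₁,…,y_m} whose generators are x₁ and y₁, and write [y_i,y₁] = Σ_{j=2}^n β_{i,j} x_j for 1 ≤ i ≤ m. Then for all 1 ≤ i,j ≤ m one has [y_i,y_j] = Σ_{s=0}^{min{i+j−1,m}−i} (−1)^s C(j−1,s) Σ_{t=2}^{n−j+s+1} β_{i+s,t} x_{t+j−s−1}, where C(j−1,s) denotes the binomial coefficient. -/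
open Finset

section ShiftOperators

variable {M : Type*} [AddCommGroup M] [Module ℂ M]

variable (M) in
abbrev seqShift : Module.End ℂ (ℕ → M) := LinearMap.funLeft ℂ M Nat.succ

lemma seqShift_pow_apply (p : ℕ) (g : ℕ → M) (i : ℕ) :
    ((seqShift M) ^ p) g i = g (i + p) := by
  induction p generalizing g with
  | zero => rfl
  | succ p ih => rw [pow_succ, Module.End.mul_apply, ih]; rfl

lemma compLeft_pow_apply (f : Module.End ℂ M) (p : ℕ) (g : ℕ → M) (i : ℕ) :
    ((f.compLeft ℕ) ^ p) g i = (f ^ p) (g i) := by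
  induction p with
  | zero => rfl
  | succ p ih => rw [pow_succ', Module.End.mul_apply, LinearMap.compLeft_apply,
      Function.comp_apply, ih, pow_succ', Module.End.mul_apply]

lemma commute_compLeft_seqShift (f : Module.End ℂ M) :
    Commute (f.compLeft ℕ) (seqShift M) := by
  ext g i; rfl

lemma compLeft_sub_seqShift_pow_apply (f : Module.End ℂ M) (k : ℕ) (g : ℕ → M) (i : ℕ) :
    ((f.compLeft ℕ - seqShift M) ^ k) g i =
      ∑ s ∈ range (k + 1), ((-1 : ℂ) ^ s * (k.choose s : ℂ)) • (f ^ (k - s)) (g (i + s)) := by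
  rw [sub_eq_neg_add, ((commute_compLeft_seqShift f).symm.neg_left).add_pow,
    LinearMap.sum_apply, Finset.sum_apply]
  refine sum_congr rfl fun s _ => ?_
  rw [← neg_one_smul ℂ (seqShift M), smul_pow]
  simp [Module.End.mul_apply, seqShift_pow_apply, compLeft_pow_apply, mul_smul,
    Nat.cast_smul_eq_nsmul]

lemma pow_apply_of_chain (f : Module.End ℂ M) {x : ℕ → M} {a n : ℕ}
    (hsucc : ∀ t, a ≤ t → t < n → f (x t) = x (t + 1)) (htop : f (x n) = 0)
    (p : ℕ) {t : ℕ} (hat : a ≤ t) (htn : t ≤ n) :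
    (f ^ p) (x t) = if t + p ≤ n then x (t + p) else 0 := by
  induction p with
  | zero => simp [htn]
  | succ p ih =>
    rw [pow_succ', Module.End.mul_apply, ih]
    by_cases hlt : t + p < n
    · rw [if_pos hlt.le, hsucc _ (by omega) hlt, if_pos (by omega), add_assoc]
    · by_cases heq : t + p = n
      · rw [if_pos heq.le, heq, htop, if_neg (by omega)]
      · rw [if_neg (by omega), if_neg (by omega), map_zero]

lemma pow_sum_Icc_of_chain (f : Module.End ℂ M) {x : ℕ → M} {a n : ℕ} (ha : 0 < a)
    (hsucc : ∀ t, a ≤ t → t < n → f (x t) = x (t + 1)) (htop : f (x n) = 0)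
    (p : ℕ) (c : ℕ → ℂ) :
    (f ^ p) (∑ t ∈ Icc a n, c t • x t) = ∑ t ∈ Icc a (n - p), c t • x (t + p) := by
  have hIcc : (Icc a n).filter (fun t => t + p ≤ n) = Icc a (n - p) := by
    ext t; simp only [mem_filter, mem_Icc]; omega
  rw [map_sum, ← hIcc, sum_filter]
  refine sum_congr rfl fun t ht => ?_
  rw [mem_Icc] at ht
  rw [map_smul, pow_apply_of_chain f hsucc htop p ht.1 ht.2, smul_ite, smul_zero]

end ShiftOperators

namespace LeibnizSuper

variable {L : Type*} [AddCommGroup L] [Module ℂ L] (S : LeibnizSuper L)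

lemma bracket_chain_eq_pow {a : ℕ → L} {e : L} (he : e ∈ S.L0) (ha : ∀ i, a i ∈ S.L1)
    (hsucc : ∀ i, S.bracket (a i) e = a (i + 1)) (k : ℕ) :
    (fun i => S.bracket (a i) (a k)) =
      (((S.R e).compLeft ℕ - seqShift L) ^ k) (fun i => S.bracket (a i) (a 0)) := by
  induction k with
  | zero => rfl
  | succ k ih =>
    rw [pow_succ', Module.End.mul_apply, ← ih]
    funext i
    rw [← hsucc k, S.leib10 _ _ (ha k) _ he, hsucc i]
    rfl

lemma bracket_y_y_eq_sum {n m : ℕ} {x y : ℕ → L} (hadapt : S.IsAdaptedPair n m x y)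
    (hn : 0 < n) {i j : ℕ} (hi : 1 ≤ i) (him : i ≤ m) (hj : 1 ≤ j) (hjm : j ≤ m) :
    S.bracket (y i) (y j) =
      ∑ s ∈ range (min (i + j - 1) m - i + 1),
        ((-1 : ℂ) ^ s * ((j - 1).choose s : ℂ)) •
          (S.R (x 1) ^ (j - 1 - s)) (S.bracket (y (i + s)) (y 1)) := by
  obtain ⟨hxL, hyL, -, -, -, -, -, hyx, hym, -⟩ := hadapt
  -- zero beyond `m`, so that `[Y i, x₁] = Y (i + 1)` holds for every `i`
  let Y : ℕ → L := fun i => if i < m then y (i + 1) else 0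
  have hYL : ∀ i, Y i ∈ S.L1 := fun i => by
    by_cases h : i < m
    · simp only [Y, if_pos h]; exact hyL _ (by omega) (by omega)
    · simp only [Y, if_neg h]; exact zero_mem _
  have hYsucc : ∀ i, S.bracket (Y i) (x 1) = Y (i + 1) := fun i => by
    simp only [Y]
    split_ifs
    · exact hyx _ (by omega) (by omega)
    · rw [show i + 1 = m by omega, hym]
    · omega
    · simp
  obtain ⟨i, rfl⟩ : ∃ i', i = i' + 1 := ⟨i - 1, by omega⟩
  obtain ⟨k, rfl⟩ : ∃ k, j = k + 1 := ⟨j - 1, by omega⟩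
  have key := congrFun (S.bracket_chain_eq_pow (hxL 1 le_rfl hn) hYL hYsucc k) i
  simp only [Y, if_pos (by omega : i < m), if_pos (by omega : k < m),
    if_pos (by omega : 0 < m)] at key
  rw [key, compLeft_sub_seqShift_pow_apply]
  simp only [Nat.add_sub_cancel, zero_add]
  refine (sum_subset (range_subset_range.mpr (by omega)) fun s hs hs' => ?_).symm.trans
    (sum_congr rfl fun s hs => ?_)
  · rw [mem_range] at hs hs'
    rw [if_neg (by omega), map_zero, LinearMap.zero_apply, map_zero, smul_zero]
  · rw [mem_range] at hs
    rw [if_pos (by omega), add_right_comm]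

end LeibnizSuper

open LeibnizSuper in
theorem bracket_yy_formula_general {L : Type*} [AddCommGroup L] [Module ℂ L]
    (S : LeibnizSuper L) (n m : ℕ)
    (hzf : S.ZeroFiliform n m)
    (x y : ℕ → L) (hadapt : S.IsAdaptedPair n m x y)
    (β : ℕ → ℕ → ℂ)
    (hβ : ∀ i, 1 ≤ i → i ≤ m →
      S.bracket (y i) (y 1) = ∑ j ∈ Finset.Icc 2 n, β i j • x j) :
    ∀ i j, 1 ≤ i → i ≤ m → 1 ≤ j → j ≤ m →
      S.bracket (y i) (y j) =
        ∑ s ∈ Finset.range (min (i + j - 1) m - i + 1),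
          ∑ t ∈ Finset.Icc 2 (n + s + 1 - j),
            ((-1 : ℂ) ^ s * (Nat.choose (j - 1) s : ℂ) * β (i + s) t) •
              x (t + j - s - 1) := by
  obtain ⟨-, -, ⟨-, -, -, -, hpos, -⟩, -⟩ := hzf
  have hn : 0 < n := hpos n (List.mem_singleton_self n)
  intro i j hi him hj hjm
  rw [S.bracket_y_y_eq_sum hadapt hn hi him hj hjm]
  obtain ⟨-, -, -, -, hxx, hxn, -⟩ := hadapt
  refine sum_congr rfl fun s hs => ?_
  rw [mem_range] at hs
  rw [hβ (i + s) (by omega) (by omega),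
    pow_sum_Icc_of_chain (S.R (x 1)) two_pos (fun t ht htn => hxx t (by omega) (by omega)) hxn,
    smul_sum, show n - (j - 1 - s) = n + s + 1 - j by omega]
  refine sum_congr rfl fun t _ => ?_
  rw [show t + (j - 1 - s) = t + j - s - 1 by omega]
  simp only [mul_smul]

open LeibnizSuper in
/-- Lemma 3.1: in a zero-filiform Leibniz superalgebra of nilindex `n+m` with adapted
basis and generators `x₁, y₁`, writing `[y_i,y₁] = Σ_{j=2}^n β_{i,j} x_j`, one has
`[y_i,y_j] = Σ_{s=0}^{min(i+j−1,m)−i} (−1)^s C(j−1,s) Σ_{t=2}^{n−j+s+1} β_{i+s,t} x_{t+j−s−1}`. -/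
theorem bracket_yy_formula {L : Type*} [AddCommGroup L] [Module ℂ L]
    [FiniteDimensional ℂ L] (S : LeibnizSuper L) (n m : ℕ)
    (hzf : S.ZeroFiliform n m) (hnil : S.HasNilindex (n + m))
    (x y : ℕ → L) (hadapt : S.IsAdaptedPair n m x y)
    (hgen : S.Generates {x 1, y 1})
    (β : ℕ → ℕ → ℂ)
    (hβ : ∀ i, 1 ≤ i → i ≤ m →
      S.bracket (y i) (y 1) = ∑ j ∈ Finset.Icc 2 n, β i j • x j) :
    ∀ i j, 1 ≤ i → i ≤ m → 1 ≤ j → j ≤ m →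
      S.bracket (y i) (y j) =
        ∑ s ∈ Finset.range (min (i + j - 1) m - i + 1),
          ∑ t ∈ Finset.Icc 2 (n + s + 1 - j),
            ((-1 : ℂ) ^ s * (Nat.choose (j - 1) s : ℂ) * β (i + s) t) •
              x (t + j - s - 1) :=
  bracket_yy_formula_general S n m hzf x y hadapt β hβ
end

section
/- Let L ∈ ZF^{2,m} (m ≥ 3) be a zero-filiform Leibniz superalgebra of nilindex m+2 with an adapted basis {x₁,x₂,y₁,…,y_m} whose generators are x₁ and y₁, and write [y_i,y₁] = β_{i,2} x₂ for 1 ≤ i ≤ m. Then [y_i,y_j] = (−1)^{j−1} β_{i+j−1,2} x₂ whenever 2 ≤ i+j ≤ m+1, and [y_i,y_j] = 0 whenever m+2 ≤ i+j ≤ 2m. -/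
/-!
Apply the Leibniz superidentity to `[y_i, [y_j, x₁]]`. By induction on `j`, `[y_i, y_j]` is a
multiple of `x₂`, which `x₁` annihilates, so the identity collapses to
`[y_i, y_{j+1}] = -[y_{i+1}, y_j]`, where `y_{m+1} = [y_m, x₁] = 0`. Starting from
`[y_i, y₁] = β_i x₂`, this recurrence moves the sign and the index shift into `β`.
-/

namespace LeibnizSuper

variable {L : Type*} [AddCommGroup L] [Module ℂ L] (S : LeibnizSuper L)

theorem bracket_bracket_eq_neg_of_bracket_bracket_eq_zero {w a z : L} (ha : a ∈ S.L1)
    (hz : z ∈ S.L0) (h : S.bracket (S.bracket w a) z = 0) :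
    S.bracket w (S.bracket a z) = -S.bracket (S.bracket w z) a := by
  rw [S.leib10 w a ha z hz, h, zero_sub]

/-- The coefficient of `x₂` in `[y_i, y_j]`. -/
def oddBracketCoeff (m : ℕ) (β : ℕ → ℂ) (i j : ℕ) : ℂ :=
  if i + j ≤ m + 1 then (-1) ^ (j - 1) * β (i + j - 1) else 0

theorem oddBracketCoeff_one {m i : ℕ} (β : ℕ → ℂ) (hi : i ≤ m) :
    oddBracketCoeff m β i 1 = β i := by
  simp [oddBracketCoeff, hi]

theorem oddBracketCoeff_succ_right {m j : ℕ} (β : ℕ → ℂ) (i : ℕ) (hj : 1 ≤ j) :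
    oddBracketCoeff m β i (j + 1) = -oddBracketCoeff m β (i + 1) j := by
  obtain ⟨k, rfl⟩ : ∃ k, j = k + 1 := ⟨j - 1, by omega⟩
  unfold oddBracketCoeff
  by_cases hle : i + (k + 1 + 1) ≤ m + 1
  · rw [if_pos hle, if_pos (by omega), show i + 1 + (k + 1) - 1 = i + (k + 1 + 1) - 1 by omega,
      Nat.add_sub_cancel, Nat.add_sub_cancel, pow_succ]
    ring
  · rw [if_neg hle, if_neg (by omega), neg_zero]

theorem oddBracketCoeff_self_succ {m j : ℕ} (β : ℕ → ℂ) (hj : 1 ≤ j) :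
    oddBracketCoeff m β m (j + 1) = 0 :=
  if_neg (by omega)

namespace IsAdaptedPair

variable {S} {n m : ℕ} {x y : ℕ → L}

theorem x_one_mem (h : S.IsAdaptedPair n m x y) (hn : 1 ≤ n) : x 1 ∈ S.L0 :=
  h.1 1 le_rfl hn

theorem y_mem (h : S.IsAdaptedPair n m x y) {j : ℕ} (hj1 : 1 ≤ j) (hjm : j ≤ m) :
    y j ∈ S.L1 :=
  h.2.1 j hj1 hjm

theorem bracket_y_x_one (h : S.IsAdaptedPair n m x y) {j : ℕ} (hj1 : 1 ≤ j) (hjm : j < m) :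
    S.bracket (y j) (x 1) = y (j + 1) :=
  h.2.2.2.2.2.2.2.1 j hj1 (by omega)

theorem bracket_y_last_x_one (h : S.IsAdaptedPair n m x y) : S.bracket (y m) (x 1) = 0 :=
  h.2.2.2.2.2.2.2.2.1

theorem bracket_x_two_x_one (h : S.IsAdaptedPair 2 m x y) : S.bracket (x 2) (x 1) = 0 :=
  h.2.2.2.2.2.1

theorem bracket_y_y_eq_oddBracketCoeff_smul (h : S.IsAdaptedPair 2 m x y) {β : ℕ → ℂ}
    (hβ : ∀ i, 1 ≤ i → i ≤ m → S.bracket (y i) (y 1) = β i • x 2)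
    {j : ℕ} (hj1 : 1 ≤ j) (hjm : j ≤ m) :
    ∀ i, 1 ≤ i → i ≤ m → S.bracket (y i) (y j) = oddBracketCoeff m β i j • x 2 := by
  induction j, hj1 using Nat.le_induction with
  | base =>
    intro i hi1 him
    rw [hβ i hi1 him, oddBracketCoeff_one β him]
  | succ j hj ih =>
    intro i hi1 him
    have hkill : S.bracket (S.bracket (y i) (y j)) (x 1) = 0 := by
      rw [ih (by omega) i hi1 him, map_smul, LinearMap.smul_apply, h.bracket_x_two_x_one,
        smul_zero]
    rw [← h.bracket_y_x_one hj (by omega), S.bracket_bracket_eq_neg_of_bracket_bracket_eq_zero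
      (h.y_mem hj (by omega)) (h.x_one_mem (by norm_num)) hkill]
    rcases him.lt_or_eq with hi | rfl
    · rw [h.bracket_y_x_one hi1 hi, ih (by omega) (i + 1) (by omega) (by omega),
        oddBracketCoeff_succ_right β i hj, neg_smul]
    · rw [h.bracket_y_last_x_one, map_zero, LinearMap.zero_apply, neg_zero,
        oddBracketCoeff_self_succ β hj, zero_smul]

end IsAdaptedPair

end LeibnizSuper

open LeibnizSuper in
theorem bracket_yy_formula_n2_general {L : Type*} [AddCommGroup L] [Module ℂ L]
    (S : LeibnizSuper L) (m : ℕ)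
    (x y : ℕ → L) (hadapt : S.IsAdaptedPair 2 m x y)
    (β : ℕ → ℂ) (hβ : ∀ i, 1 ≤ i → i ≤ m → S.bracket (y i) (y 1) = β i • x 2) :
    (∀ i j, 1 ≤ i → i ≤ m → 1 ≤ j → j ≤ m → i + j ≤ m + 1 →
      S.bracket (y i) (y j) = ((-1 : ℂ) ^ (j - 1) * β (i + j - 1)) • x 2) ∧
    (∀ i j, 1 ≤ i → i ≤ m → 1 ≤ j → j ≤ m → m + 2 ≤ i + j →
      S.bracket (y i) (y j) = 0) := by
  have hyy := fun i j (hi1 : 1 ≤ i) (him : i ≤ m) (hj1 : 1 ≤ j) (hjm : j ≤ m) =>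
    hadapt.bracket_y_y_eq_oddBracketCoeff_smul hβ hj1 hjm i hi1 him
  refine ⟨fun i j hi1 him hj1 hjm hsum => ?_, fun i j hi1 him hj1 hjm hsum => ?_⟩
  · rw [hyy i j hi1 him hj1 hjm, oddBracketCoeff, if_pos hsum]
  · rw [hyy i j hi1 him hj1 hjm, oddBracketCoeff, if_neg (by omega), zero_smul]

open LeibnizSuper in
/-- Formula (2): in `L ∈ ZF^{2,m}` (`m ≥ 3`) of nilindex `m+2` with adapted basis and
generators `x₁, y₁`, writing `[y_i,y₁] = β_{i,2} x₂`, one has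
`[y_i,y_j] = (−1)^{j−1} β_{i+j−1,2} x₂` for `2 ≤ i+j ≤ m+1` and `[y_i,y_j] = 0`
for `m+2 ≤ i+j ≤ 2m`. -/
theorem bracket_yy_formula_n2 {L : Type*} [AddCommGroup L] [Module ℂ L]
    [FiniteDimensional ℂ L] (S : LeibnizSuper L) (m : ℕ) (hm : 3 ≤ m)
    (hzf : S.ZeroFiliform 2 m) (hnil : S.HasNilindex (m + 2))
    (x y : ℕ → L) (hadapt : S.IsAdaptedPair 2 m x y)
    (hgen : S.Generates {x 1, y 1})
    (β : ℕ → ℂ) (hβ : ∀ i, 1 ≤ i → i ≤ m → S.bracket (y i) (y 1) = β i • x 2) :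
    (∀ i j, 1 ≤ i → i ≤ m → 1 ≤ j → j ≤ m → i + j ≤ m + 1 →
      S.bracket (y i) (y j) = ((-1 : ℂ) ^ (j - 1) * β (i + j - 1)) • x 2) ∧
    (∀ i j, 1 ≤ i → i ≤ m → 1 ≤ j → j ≤ m → m + 2 ≤ i + j →
      S.bracket (y i) (y j) = 0) :=
  bracket_yy_formula_n2_general S m x y hadapt β hβ
end

section
/- Let L ∈ ZF^{2,m} (m ≥ 3) be a zero-filiform Leibniz superalgebra of nilindex m+2 with an adapted basis {x₁,x₂,y₁,…,y_m} whose generators are x₁ and y₁, write [y_i,y₁] = β_{i,2} x₂ for 1 ≤ i ≤ m, and suppose [x₁,y₁] = −y₂ (i.e. the coefficient of y₂ in [x₁,y₁] is −1 and the coefficients of y₃,…,y_m are 0). Then β_{2i,2} = 0 for all 1 ≤ i ≤ ⌊m/2⌋. -/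
/-!
Writing `y_{j+1} = [y_j, x₁]` and applying the Leibniz identity gives
`[y_i, y_{j+1}] = (-1)^j β_{i+j} x₂`. For odd `v` the Leibniz superidentity reads
`[u, [v, v]] = 2 [[u, v], v]`. With `u = y_{2t}`, `v = y₁` it gives `β_{2t} [x₂, y₁] = 0`,
so either `β_{2t} = 0` or `[x₂, y₁] = 0`. In the latter case `x₂` annihilates every `y_j`
from the left and `[x₁, y_j] = -y_{j+1}` for all `j`; then `u = x₁`, `v = y_t` gives
`0 = [x₁, [y_t, y_t]] = -2 [y_{t+1}, y_t] = ± 2 β_{2t} x₂`.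
-/

namespace LeibnizSuper

variable {L : Type*} [AddCommGroup L] [Module ℂ L] (S : LeibnizSuper L)

def IsRightChain (a : L) (m : ℕ) (y : ℕ → L) : Prop :=
  (∀ j, 1 ≤ j → j ≤ m → y j ∈ S.L1) ∧
    ∀ j, 1 ≤ j → j ≤ m - 1 → S.bracket (y j) a = y (j + 1)

theorem bracket_bracket_self_of_mem_L1 (u : L) {v : L} (hv : v ∈ S.L1) :
    S.bracket u (S.bracket v v) = (2 : ℂ) • S.bracket (S.bracket u v) v := by
  rw [S.leib11 u v hv v hv, two_smul]

variable {S}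

theorem smul_bracket_eq_zero_of_mem_L1 {u v w : L} {c d : ℂ} (hv : v ∈ S.L1)
    (hvv : S.bracket v v = d • w) (huw : S.bracket u w = 0) (huv : S.bracket u v = c • w) :
    c • S.bracket w v = 0 := by
  have h := S.bracket_bracket_self_of_mem_L1 u hv
  rwa [hvv, map_smul, huw, smul_zero, huv, LinearMap.map_smul₂, eq_comm, smul_eq_zero,
    or_iff_right two_ne_zero] at h

theorem bracket_eq_zero_of_bracket_eq_neg {a u v : L} (hv : v ∈ S.L1)
    (hav : S.bracket a v = -u) (ha : S.bracket a (S.bracket v v) = 0) :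
    S.bracket u v = 0 := by
  have h := S.bracket_bracket_self_of_mem_L1 a hv
  rwa [ha, hav, map_neg, LinearMap.neg_apply, smul_neg, eq_comm, neg_eq_zero, smul_eq_zero,
    or_iff_right two_ne_zero] at h

variable {a b : L} {y : ℕ → L} {m : ℕ}

theorem IsRightChain.bracket_succ (hy : S.IsRightChain a m y) (ha : a ∈ S.L0)
    (hba : S.bracket b a = 0) {β : ℕ → ℂ}
    (hβ : ∀ i, 1 ≤ i → i ≤ m → S.bracket (y i) (y 1) = β i • b) :
    ∀ j i, 1 ≤ i → i + j ≤ m →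
      S.bracket (y i) (y (j + 1)) = ((-1 : ℂ) ^ j * β (i + j)) • b := by
  intro j
  induction j with
  | zero => intro i hi him; simpa using hβ i hi him
  | succ j ih =>
    intro i hi him
    rw [← hy.2 (j + 1) (by omega) (by omega),
      S.leib10 _ _ (hy.1 (j + 1) (by omega) (by omega)) _ ha,
      ih i hi (by omega), LinearMap.map_smul₂, hba, smul_zero, zero_sub,
      hy.2 i hi (by omega), ih (i + 1) (by omega) (by omega), ← neg_smul,
      show i + 1 + j = i + (j + 1) by omega, pow_succ]
    ring_nf

theorem IsRightChain.bracket_eq_zero (hy : S.IsRightChain a m y) (ha : a ∈ S.L0)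
    {z : L} (hza : S.bracket z a = 0) (hzy : S.bracket z (y 1) = 0) :
    ∀ j, 1 ≤ j → j ≤ m → S.bracket z (y j) = 0 := by
  intro j
  induction j with
  | zero => omega
  | succ j ih =>
    intro _ hjm
    rcases Nat.eq_zero_or_pos j with rfl | hj
    · exact hzy
    · rw [← hy.2 j hj (by omega), S.leib10 _ _ (hy.1 j hj (by omega)) _ ha,
        ih hj (by omega), hza]
      simp

theorem IsRightChain.bracket_left_eq_neg (hy : S.IsRightChain a m y) (ha : a ∈ S.L0)
    (hby : ∀ j, 1 ≤ j → j ≤ m → S.bracket b (y j) = 0) (haa : S.bracket a a = b)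
    (hay : S.bracket a (y 1) = -y 2) :
    ∀ j, 1 ≤ j → j ≤ m - 1 → S.bracket a (y j) = -y (j + 1) := by
  intro j
  induction j with
  | zero => omega
  | succ j ih =>
    intro _ hjm
    rcases Nat.eq_zero_or_pos j with rfl | hj
    · exact hay
    · rw [← hy.2 j hj (by omega), S.leib10 _ _ (hy.1 j hj (by omega)) _ ha,
        ih hj (by omega), haa, hby j hj (by omega), sub_zero, map_neg,
        LinearMap.neg_apply, hy.2 (j + 1) (by omega) (by omega)]

end LeibnizSuper

open LeibnizSuper in
theorem beta_even_eq_zero_general {L : Type*} [AddCommGroup L] [Module ℂ L]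
    (S : LeibnizSuper L) (m : ℕ)
    (x y : ℕ → L) (hadapt : S.IsAdaptedPair 2 m x y)
    (β : ℕ → ℂ) (hβ : ∀ i, 1 ≤ i → i ≤ m → S.bracket (y i) (y 1) = β i • x 2)
    (hx1y1 : S.bracket (x 1) (y 1) = - y 2) :
    ∀ i, 1 ≤ i → i ≤ m / 2 → β (2 * i) = 0 := by
  obtain ⟨hx, hy, hlin, -, hxx, hx₂x₁, hxk, hyx₁, -, hyxk⟩ := hadapt
  have hchain : S.IsRightChain (x 1) m y := ⟨hy, hyx₁⟩
  have hx₁ : x 1 ∈ S.L0 := hx 1 le_rfl one_le_two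
  have hx₂ : x 2 ≠ 0 := by simpa using hlin.ne_zero (Sum.inl (1 : Fin 2))
  have hyy := hchain.bracket_succ hx₁ hx₂x₁ hβ
  intro t ht htm
  obtain hβt | hx₂y₁ := smul_eq_zero.mp <| smul_bracket_eq_zero_of_mem_L1
    (hy 1 le_rfl (by omega)) (hβ 1 le_rfl (by omega))
    (hyxk (2 * t) 2 (by omega) (by omega) le_rfl le_rfl) (hβ (2 * t) (by omega) (by omega))
  · exact hβt
  have hx₂y := hchain.bracket_eq_zero hx₁ hx₂x₁ hx₂y₁
  have hx₁y := hchain.bracket_left_eq_neg hx₁ hx₂y (hxx 1 le_rfl le_rfl) hx1y1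
  obtain ⟨s, rfl⟩ := Nat.exists_eq_add_of_le' ht
  have h := bracket_eq_zero_of_bracket_eq_neg (hy (s + 1) ht (by omega))
    (hx₁y (s + 1) ht (by omega)) (by
      rw [hyy s (s + 1) ht (by omega), map_smul,
        hxk 1 2 le_rfl one_le_two le_rfl le_rfl, smul_zero])
  rw [hyy s (s + 1 + 1) (by omega) (by omega), show s + 1 + 1 + s = 2 * (s + 1) by ring,
    smul_eq_zero] at h
  simpa [hx₂] using h

open LeibnizSuper in
/-- In `L ∈ ZF^{2,m}` (`m ≥ 3`) of nilindex `m+2` with adapted basis, generators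
`x₁, y₁`, `[y_i,y₁] = β_{i,2} x₂` and `[x₁,y₁] = −y₂`, one has `β_{2i,2} = 0`
for all `1 ≤ i ≤ ⌊m/2⌋`. -/
theorem beta_even_eq_zero {L : Type*} [AddCommGroup L] [Module ℂ L]
    [FiniteDimensional ℂ L] (S : LeibnizSuper L) (m : ℕ) (hm : 3 ≤ m)
    (hzf : S.ZeroFiliform 2 m) (hnil : S.HasNilindex (m + 2))
    (x y : ℕ → L) (hadapt : S.IsAdaptedPair 2 m x y)
    (hgen : S.Generates {x 1, y 1})
    (β : ℕ → ℂ) (hβ : ∀ i, 1 ≤ i → i ≤ m → S.bracket (y i) (y 1) = β i • x 2)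
    (hx1y1 : S.bracket (x 1) (y 1) = - y 2) :
    ∀ i, 1 ≤ i → i ≤ m / 2 → β (2 * i) = 0 :=
  beta_even_eq_zero_general S m x y hadapt β hβ hx1y1
end
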